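/- arXiv:2503.03531 — 3 statements merged into one kernel-verified Lean document; each statement's English description precedes it below -/
import Mathlib

section
/- (Equivalence of the two forms of the Fokker–Planck equation) For a strictly positive density ρ on a locally finite weighted graph, div_G(ρ ∇_G Ψ)(x_i) + Δ_G ρ(x_i) = Σ_{j∼i} (ω_{ij}/π_i)[(Ψ(x_j) + log ρ(x_j)) − (Ψ(x_i) + log ρ(x_i))] ρ̂(x_i,x_j) for every vertex x_i. -/
noncomputable def logMean (a b : ℝ) : ℝ :=
  if a = b then a else (a - b) / (Real.log a - Real.log b)

noncomputable def rhat (ρ : ℕ → ℝ) (i j : ℕ) : ℝ :=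
  if 0 < ρ i ∧ 0 < ρ j then logMean (ρ i) (ρ j) else 0

lemma log_mul_logMean (a b : ℝ) (ha : 0 < a) (hb : 0 < b) :
    (Real.log a - Real.log b) * logMean a b = a - b := by
  unfold logMean
  by_cases h : a = b
  · simp [h]
  · have hlog : Real.log a ≠ Real.log b := fun hl =>
      h (Real.log_injOn_pos (Set.mem_Ioi.mpr ha) (Set.mem_Ioi.mpr hb) hl)
    rw [if_neg h, mul_div_assoc', mul_comm, mul_div_assoc,
      div_self (sub_ne_zero.mpr hlog), mul_one]

/-- Equivalence of the two forms of the Fokker–Planck equation on a locally finite graph. -/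
theorem fokker_planck_two_forms
    (ω : ℕ → ℕ → ℝ) (π : ℕ → ℝ) (ρ Ψ : ℕ → ℝ)
    (hω_nonneg : ∀ i j, 0 ≤ ω i j)
    (hfin : ∀ i, {j | ω i j ≠ 0}.Finite)
    (hπ : ∀ i, π i = ∑' j, ω i j)
    (hπ_pos : ∀ i, 0 < π i)
    (hρ_pos : ∀ i, 0 < ρ i) :
    ∀ i, (∑' j, (ω i j / π i) * (Ψ j - Ψ i) * rhat ρ i j)
        + (∑' j, (ω i j / π i) * (ρ j - ρ i))
      = ∑' j, (ω i j / π i) *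
          ((Ψ j + Real.log (ρ j)) - (Ψ i + Real.log (ρ i))) * rhat ρ i j := by
  intro i
  have hsupp : ∀ (f : ℕ → ℝ), (∀ j, ω i j = 0 → f j = 0) → Summable f := by
    intro f hf
    apply summable_of_ne_finset_zero (s := (hfin i).toFinset)
    intro j hj
    exact hf j (by simpa using hj)
  have h1 : Summable (fun j => (ω i j / π i) * (Ψ j - Ψ i) * rhat ρ i j) :=
    hsupp _ (fun j hj => by simp [hj])
  have h2 : Summable (fun j => (ω i j / π i) * (ρ j - ρ i)) :=
    hsupp _ (fun j hj => by simp [hj])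
  rw [← Summable.tsum_add h1 h2]
  congr 1
  funext j
  have key : (Real.log (ρ j) - Real.log (ρ i)) * rhat ρ i j = ρ j - ρ i := by
    rw [rhat, if_pos ⟨hρ_pos i, hρ_pos j⟩]
    have := log_mul_logMean (ρ i) (ρ j) (hρ_pos i) (hρ_pos j)
    nlinarith [log_mul_logMean (ρ i) (ρ j) (hρ_pos i) (hρ_pos j)]
  calc (ω i j / π i) * (Ψ j - Ψ i) * rhat ρ i j + (ω i j / π i) * (ρ j - ρ i)
      = (ω i j / π i) * ((Ψ j - Ψ i) * rhat ρ i j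
          + (Real.log (ρ j) - Real.log (ρ i)) * rhat ρ i j) := by rw [key]; ring
    _ = (ω i j / π i) * ((Ψ j + Real.log (ρ j)) - (Ψ i + Real.log (ρ i))) * rhat ρ i j := by ring
end

section
/- (Boundary repulsion for the Fokker–Planck vector field) Let G be a connected locally finite weighted graph, ρ a nonnegative density with ρ_i = 0 for i in a nonempty proper subset M_1 ⊂ ℕ and ρ_i > 0 for i ∉ M_1, and Ψ any potential. Suppose x_i with i ∈ M_1 is adjacent to some x_k with k ∉ M_1. Then the Fokker–Planck right-hand side at x_i, namely Σ_{j∼i} (ω_{ij}/π_i)[(Ψ_j − Ψ_i) ρ̂(x_i,x_j) + (ρ_j − ρ_i)], is strictly positive. -/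
/-- Boundary repulsion: at a vertex where the density vanishes but which has a neighbor
with positive density, the Fokker–Planck right-hand side is strictly positive. -/
theorem boundary_repulsion
    (ω : ℕ → ℕ → ℝ) (π : ℕ → ℝ) (ρ Ψ : ℕ → ℝ) (M₁ : Set ℕ)
    (hω_nonneg : ∀ i j, 0 ≤ ω i j)
    (hfin : ∀ i, {j | ω i j ≠ 0}.Finite)
    (hπ : ∀ i, π i = ∑' j, ω i j)
    (hπ_pos : ∀ i, 0 < π i)
    (hρ_nonneg : ∀ i, 0 ≤ ρ i)
    (hM₁_ne : M₁.Nonempty) (hM₁_proper : M₁ ≠ Set.univ)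
    (hzero : ∀ i, ρ i = 0 ↔ i ∈ M₁)
    (i k : ℕ) (hi : i ∈ M₁) (hk : k ∉ M₁) (hik : 0 < ω i k) :
    0 < ∑' j, (ω i j / π i) * ((Ψ j - Ψ i) * rhat ρ i j + (ρ j - ρ i)) := by
  have hρi : ρ i = 0 := (hzero i).2 hi
  have hρk : 0 < ρ k := lt_of_le_of_ne (hρ_nonneg k) (fun h => hk ((hzero k).1 h.symm))
  have hrhat : ∀ j, rhat ρ i j = 0 := by
    intro j
    simp [rhat, hρi]
  have hf : ∀ j, (ω i j / π i) * ((Ψ j - Ψ i) * rhat ρ i j + (ρ j - ρ i))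
      = (ω i j / π i) * ρ j := by
    intro j; rw [hrhat, hρi]; ring
  simp only [hf]
  have hsum : Summable (fun j => (ω i j / π i) * ρ j) := by
    apply summable_of_finite_support
    apply (hfin i).subset
    intro j hj
    simp only [Function.mem_support] at hj
    intro h0
    apply hj
    simp [h0]
  refine Summable.tsum_pos hsum (fun j => mul_nonneg (div_nonneg (hω_nonneg i j) (hπ_pos i).le) (hρ_nonneg j)) k ?_
  exact mul_pos (div_pos hik (hπ_pos i)) hρk
end

section
/- (Free energy decreases along the gradient flow) Suppose ρ(t) is a differentiable curve in the positive probability densities satisfying dρ/dt = −B_ρ(δF/δρ), where B_ρ p (x_i) = −Σ_{j∼i} (ω_{ij}/π_i)(p(x_j) − p(x_i)) ρ̂(x_i,x_j) and δF/δρ = (Ψ_i + 1 + log ρ_i)_i. Then d/dt F(ρ(t)) = −(1/2) Σ_i Σ_{j∼i} ω_{ij} [(Ψ_j + log ρ_j) − (Ψ_i + log ρ_i)]^2 ρ̂(x_i,x_j) ≤ 0, assuming all relevant series converge absolutely. -/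
lemma logMean_comm (a b : ℝ) : logMean a b = logMean b a := by
  unfold logMean
  rcases eq_or_ne a b with h | h
  · simp [h]
  · rw [if_neg h, if_neg (Ne.symm h),
      show b - a = -(a - b) by ring,
      show Real.log b - Real.log a = -(Real.log a - Real.log b) by ring,
      neg_div_neg_eq]

lemma logMean_nonneg {a b : ℝ} (ha : 0 < a) (hb : 0 < b) : 0 ≤ logMean a b := by
  unfold logMean
  rcases eq_or_ne a b with h | h
  · simpa [h] using ha.le
  · rw [if_neg h]
    rcases h.lt_or_gt with hlt | hlt
    · exact (div_pos_of_neg_of_neg (by linarith) (by simpa using Real.log_lt_log ha hlt)).le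
    · exact (div_pos (by linarith) (by simpa using sub_pos.2 (Real.log_lt_log hb hlt))).le

lemma rhat_comm (ρ : ℕ → ℝ) (i j : ℕ) : rhat ρ i j = rhat ρ j i := by
  unfold rhat
  rw [logMean_comm]
  congr 1
  exact propext and_comm

lemma rhat_nonneg (ρ : ℕ → ℝ) (i j : ℕ) : 0 ≤ rhat ρ i j := by
  unfold rhat
  split
  · next h => exact logMean_nonneg h.1 h.2
  · exact le_refl 0

set_option maxHeartbeats 1000000 in
/-- The free energy decreases along the gradient flow: its derivative along the
Fokker–Planck flow equals `-(1/2) Σ ω [(Ψ+log ρ)_j − (Ψ+log ρ)_i]² ρ̂ ≤ 0`,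
assuming the relevant series converge absolutely and term-by-term differentiation
of the free energy is valid. -/
theorem free_energy_decreases
    (ω : ℕ → ℕ → ℝ) (π : ℕ → ℝ) (Ψ : ℕ → ℝ)
    (ρ : ℝ → ℕ → ℝ) (σ : ℝ → ℕ → ℝ) (F : ℝ → ℝ)
    (hω_nonneg : ∀ i j, 0 ≤ ω i j)
    (hω_symm : ∀ i j, ω i j = ω j i)
    (hπ : ∀ i, π i = ∑' j, ω i j)
    (hπ_pos : ∀ i, 0 < π i)
    (hρ_pos : ∀ t i, 0 < ρ t i)
    (hρ_prob : ∀ t, ∑' i, ρ t i * π i = 1)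
    -- the gradient-flow vector field `σ t = -B_{ρ(t)} (δF/δρ)`
    (hσ : ∀ t i, σ t i = ∑' j, (ω i j / π i) *
        ((Ψ j + 1 + Real.log (ρ t j)) - (Ψ i + 1 + Real.log (ρ t i))) * rhat (ρ t) i j)
    -- the curve solves the gradient flow equation
    (hflow : ∀ t i, HasDerivAt (fun s => ρ s i) (σ t i) t)
    -- the free energy
    (hF : ∀ t, F t = ∑' i, π i * (Ψ i * ρ t i + ρ t i * Real.log (ρ t i)))
    -- term-by-term differentiation of the free energy is valid
    (hF' : ∀ t, HasDerivAt F
        (∑' i, π i * (Ψ i + 1 + Real.log (ρ t i)) * σ t i) t)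
    -- absolute convergence of the relevant double series
    (hsum1 : ∀ t, Summable (fun p : ℕ × ℕ => ω p.1 p.2 *
        ((Ψ p.2 + Real.log (ρ t p.2)) - (Ψ p.1 + Real.log (ρ t p.1))) ^ 2 *
        rhat (ρ t) p.1 p.2))
    (hsum2 : ∀ t, Summable (fun p : ℕ × ℕ => |ω p.1 p.2 *
        ((Ψ p.2 + Real.log (ρ t p.2)) - (Ψ p.1 + Real.log (ρ t p.1))) *
        (Ψ p.1 + 1 + Real.log (ρ t p.1)) * rhat (ρ t) p.1 p.2|)) :
    ∀ t, HasDerivAt F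
        (-(1 / 2) * ∑' p : ℕ × ℕ, ω p.1 p.2 *
          ((Ψ p.2 + Real.log (ρ t p.2)) - (Ψ p.1 + Real.log (ρ t p.1))) ^ 2 *
          rhat (ρ t) p.1 p.2) t ∧
      -(1 / 2) * (∑' p : ℕ × ℕ, ω p.1 p.2 *
          ((Ψ p.2 + Real.log (ρ t p.2)) - (Ψ p.1 + Real.log (ρ t p.1))) ^ 2 *
          rhat (ρ t) p.1 p.2) ≤ 0 := by
  intro t
  set f : ℕ × ℕ → ℝ := fun p => ω p.1 p.2 *
      ((Ψ p.2 + Real.log (ρ t p.2)) - (Ψ p.1 + Real.log (ρ t p.1))) *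
      (Ψ p.1 + 1 + Real.log (ρ t p.1)) * rhat (ρ t) p.1 p.2 with hf_def
  have hf : Summable f := by
    rw [← summable_abs_iff]; exact hsum2 t
  have hfs : Summable (fun p : ℕ × ℕ => f p.swap) :=
    (Equiv.prodComm ℕ ℕ).summable_iff.2 hf
  set T : ℝ := ∑' p : ℕ × ℕ, ω p.1 p.2 *
      ((Ψ p.2 + Real.log (ρ t p.2)) - (Ψ p.1 + Real.log (ρ t p.1))) ^ 2 *
      rhat (ρ t) p.1 p.2 with hT_def
  -- Step 1: each i-term rewrites
  have step1 : (∑' i, π i * (Ψ i + 1 + Real.log (ρ t i)) * σ t i)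
      = ∑' i, ∑' j, f (i, j) := by
    refine tsum_congr fun i => ?_
    rw [hσ t i, ← tsum_mul_left]
    refine tsum_congr fun j => ?_
    have hπi : π i ≠ 0 := (hπ_pos i).ne'
    simp only [hf_def]
    field_simp
    ring
  -- Step 2: iterated sum equals the sum over pairs
  have step2 : (∑' i, ∑' j, f (i, j)) = ∑' p : ℕ × ℕ, f p := (Summable.tsum_prod hf).symm
  -- Step 3: symmetry
  have hswap : (∑' p : ℕ × ℕ, f p.swap) = ∑' p : ℕ × ℕ, f p :=
    (Equiv.prodComm ℕ ℕ).tsum_eq f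
  have key : (∑' p : ℕ × ℕ, f p) + (∑' p : ℕ × ℕ, f p) = -T := by
    have : (∑' p : ℕ × ℕ, f p) + (∑' p : ℕ × ℕ, f p)
        = ∑' p : ℕ × ℕ, (f p.swap + f p) := by
      rw [Summable.tsum_add hfs hf, hswap]
    rw [this, hT_def, ← tsum_neg]
    refine tsum_congr fun p => ?_
    simp only [hf_def, Prod.fst_swap, Prod.snd_swap]
    rw [hω_symm p.2 p.1, rhat_comm (ρ t) p.2 p.1]
    ring
  have hsum_eq : (∑' i, π i * (Ψ i + 1 + Real.log (ρ t i)) * σ t i) = -(1 / 2) * T := by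
    rw [step1, step2]; linarith [key]
  constructor
  · have := hF' t
    rwa [hsum_eq] at this
  · have hT_nonneg : 0 ≤ T := by
      refine tsum_nonneg fun p => ?_
      have := rhat_nonneg (ρ t) p.1 p.2
      have := hω_nonneg p.1 p.2
      positivity
    linarith
end
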